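/- arXiv:math/0201008 — 8 statements merged into one kernel-verified Lean document; each statement's English description precedes it below -/
import Mathlib

section
/- Let k be a field of characteristic zero and t ∈ k with 20t + 3 ≠ 0. Define i₁ = −144·t(20t−9)/(20t+3)² and i₂ = 3456·t²(140t−27)/(20t+3)³. If the quantity D = 2925·i₁² + 250·i₁·i₂ − 9450·i₂ − 54000·i₁ + 139968 is nonzero, then t = −(3/4)·(345·i₁² + 50·i₁·i₂ − 90·i₂ − 1296·i₁)/D. -/
set_option maxHeartbeats 1000000 in
theorem stmt_0 {k : Type*} [Field k] [CharZero k] (t : k)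
    (ht : 20 * t + 3 ≠ 0)
    (i1 i2 : k)
    (hi1 : i1 = -144 * (t * (20 * t - 9)) / (20 * t + 3) ^ 2)
    (hi2 : i2 = 3456 * (t ^ 2 * (140 * t - 27)) / (20 * t + 3) ^ 3)
    (hD : 2925 * i1 ^ 2 + 250 * i1 * i2 - 9450 * i2 - 54000 * i1 + 139968 ≠ 0) :
    t = -(3 / 4) * (345 * i1 ^ 2 + 50 * i1 * i2 - 90 * i2 - 1296 * i1) /
      (2925 * i1 ^ 2 + 250 * i1 * i2 - 9450 * i2 - 54000 * i1 + 139968) := by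
  rw [eq_div_iff hD]
  have h1 : i1 * (20 * t + 3) ^ 2 = -144 * (t * (20 * t - 9)) := by
    rw [hi1, div_mul_cancel₀ _ (pow_ne_zero 2 ht)]
  have h2 : i2 * (20 * t + 3) ^ 3 = 3456 * (t ^ 2 * (140 * t - 27)) := by
    rw [hi2, div_mul_cancel₀ _ (pow_ne_zero 3 ht)]
  have key : (t * (2925 * i1 ^ 2 + 250 * i1 * i2 - 9450 * i2 - 54000 * i1 + 139968)
      + (3 / 4) * (345 * i1 ^ 2 + 50 * i1 * i2 - 90 * i2 - 1296 * i1))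
      * (20 * t + 3) ^ 6 = 0 := by
    linear_combination
      ((2925 * t + 1035 / 4) * (i1 * (20 * t + 3) ^ 2 + -144 * (t * (20 * t - 9)))
          * (20 * t + 3) ^ 2
        + (250 * t + 75 / 2) * (3456 * (t ^ 2 * (140 * t - 27))) * (20 * t + 3)
        + (-54000 * t - 972) * (20 * t + 3) ^ 4) * h1
      + ((250 * t + 75 / 2) * i1 + (-9450 * t - 135 / 2)) * (20 * t + 3) ^ 3 * h2
  have hP := (mul_eq_zero.mp key).resolve_right (pow_ne_zero 6 ht)
  linear_combination hP
end

section
/- Let u, v be elements of an algebraically closed field k of characteristic zero with v ≠ 0, and set R = 27v + 4v² − u²v + 4u³ − 18uv. Then the degree 6 polynomial f(X) = (v²X³ + uvX² + vX + 1)(4v²X³ + v²X² + 2vX + 1) ∈ k[X] has a repeated root if and only if (v − 27)·R = 0. -/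
/-!
A product is squarefree iff both factors are squarefree and relatively prime. Over an
algebraically closed field a cubic is squarefree iff its discriminant is nonzero; the two cubic
factors have discriminants `-v³R` and `16v⁴(v - 27)`. A common root of the two factors forces
`R = 0` as well, so coprimality adds no further condition.
-/

theorem Cubic.squarefree_toPoly_iff_discr_ne_zero {K : Type*} [Field K] [PerfectField K]
    {P : Cubic K} (ha : P.a ≠ 0) (hP : P.toPoly.Splits) :
    Squarefree P.toPoly ↔ P.discr ≠ 0 := by
  rw [← PerfectField.separable_iff_squarefree,
    ← Polynomial.nodup_roots_iff_of_splits (ne_zero_of_a_ne_zero ha) hP,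
    discr_ne_zero_iff_roots_nodup (φ := RingHom.id K) ha (by simpa using hP)]
  simp [Cubic.map_roots]

-- The certificate exhibits `v⁵R` in the ideal generated by the two cubics.
theorem eq_zero_of_common_root {K : Type*} [Field K] {u v c : K} (hv : v ≠ 0)
    (hp : v ^ 2 * c ^ 3 + u * v * c ^ 2 + v * c + 1 = 0)
    (hq : 4 * v ^ 2 * c ^ 3 + v ^ 2 * c ^ 2 + 2 * v * c + 1 = 0) :
    27 * v + 4 * v ^ 2 - u ^ 2 * v + 4 * u ^ 3 - 18 * u * v = 0 := by
  refine (mul_eq_zero.mp ?_).resolve_left (pow_ne_zero 5 hv)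
  linear_combination
    (36 * v ^ 6 + 12 * v ^ 7 - 24 * v ^ 7 * c + v ^ 8 + 3 * v ^ 8 * c + 28 * v ^ 8 * c ^ 2
      + v ^ 9 * c + 4 * v ^ 9 * c ^ 2 - 40 * u * v ^ 6 - 7 * u * v ^ 7 + 8 * u * v ^ 7 * c
      - 48 * u * v ^ 7 * c ^ 2 - 6 * u * v ^ 8 * c - 24 * u * v ^ 8 * c ^ 2 + 12 * u ^ 2 * v ^ 6
      - 16 * u ^ 2 * v ^ 6 * c + 8 * u ^ 2 * v ^ 7 * c + 32 * u ^ 2 * v ^ 7 * c ^ 2) * hp -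
    (9 * v ^ 6 + 8 * v ^ 7 - 6 * v ^ 7 * c + v ^ 8 - v ^ 8 * c + 7 * v ^ 8 * c ^ 2
      + v ^ 9 * c ^ 2 - 22 * u * v ^ 6 - 7 * u * v ^ 7 + 12 * u * v ^ 7 * c
      - 12 * u * v ^ 7 * c ^ 2 + u * v ^ 8 * c - 6 * u * v ^ 8 * c ^ 2 + 13 * u ^ 2 * v ^ 6
      - 16 * u ^ 2 * v ^ 6 * c - 6 * u ^ 2 * v ^ 7 * c + 8 * u ^ 2 * v ^ 7 * c ^ 2
      - 4 * u ^ 3 * v ^ 5 + 8 * u ^ 3 * v ^ 6 * c) * hq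

open Polynomial in
theorem stmt_5 {k : Type*} [Field k] [CharZero k] [IsAlgClosed k] (u v : k)
    (hv : v ≠ 0) :
    ¬ Squarefree ((C (v ^ 2) * X ^ 3 + C (u * v) * X ^ 2 + C v * X + 1) *
        (C (4 * v ^ 2) * X ^ 3 + C (v ^ 2) * X ^ 2 + C (2 * v) * X + 1) : k[X]) ↔
      (v - 27) * (27 * v + 4 * v ^ 2 - u ^ 2 * v + 4 * u ^ 3 - 18 * u * v) = 0 := by
  set P : Cubic k := ⟨v ^ 2, u * v, v, 1⟩
  set Q : Cubic k := ⟨4 * v ^ 2, v ^ 2, 2 * v, 1⟩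
  have hP : P.toPoly = C (v ^ 2) * X ^ 3 + C (u * v) * X ^ 2 + C v * X + 1 := by
    simp [P, Cubic.toPoly]
  have hQ : Q.toPoly = C (4 * v ^ 2) * X ^ 3 + C (v ^ 2) * X ^ 2 + C (2 * v) * X + 1 := by
    simp [Q, Cubic.toPoly]
  have hdiscrP : P.discr = -v ^ 3 * (27 * v + 4 * v ^ 2 - u ^ 2 * v + 4 * u ^ 3 - 18 * u * v) := by
    simp only [P, Cubic.discr]; ring
  have hdiscrQ : Q.discr = 16 * v ^ 4 * (v - 27) := by
    simp only [Q, Cubic.discr]; ring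
  have hcommon : ¬ IsRelPrime P.toPoly Q.toPoly →
      27 * v + 4 * v ^ 2 - u ^ 2 * v + 4 * u ^ 3 - 18 * u * v = 0 := by
    rw [isRelPrime_iff_isCoprime, isCoprime_iff_aeval_ne_zero_of_isAlgClosed k k]
    push Not
    rintro ⟨c, hp, hq⟩
    exact eq_zero_of_common_root hv (by simpa [P, Cubic.toPoly] using hp)
      (by simpa [Q, Cubic.toPoly] using hq)
  have hv2 : v ^ 2 ≠ 0 := pow_ne_zero 2 hv
  rw [← hP, ← hQ, squarefree_mul_iff,
    Cubic.squarefree_toPoly_iff_discr_ne_zero hv2 (IsAlgClosed.splits _),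
    Cubic.squarefree_toPoly_iff_discr_ne_zero (mul_ne_zero (by norm_num) hv2)
      (IsAlgClosed.splits _), hdiscrP, hdiscrQ]
  simp only [neg_mul, ne_eq, neg_eq_zero, mul_eq_zero, OfNat.ofNat_ne_zero, not_false_eq_true,
    pow_eq_zero_iff, hv, false_or, not_and, not_not]
  tauto
end

section
/- For all X in a commutative ring, 27·(X³+X)³ + 4·(X³+X) = (3X²+4)·(X³+X)·(3X²+1)². Consequently, if (X, Y) is a point on the genus 2 curve Y² = (3X²+4)(X³+X), then (U, V) = (X³+X, Y·(3X²+1)) satisfies V² = 27U³ + 4U. -/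
theorem stmt_8 {R : Type*} [CommRing R] :
    (∀ X : R, 27 * (X ^ 3 + X) ^ 3 + 4 * (X ^ 3 + X)
        = (3 * X ^ 2 + 4) * (X ^ 3 + X) * (3 * X ^ 2 + 1) ^ 2) ∧
    (∀ X Y : R, Y ^ 2 = (3 * X ^ 2 + 4) * (X ^ 3 + X) →
      (Y * (3 * X ^ 2 + 1)) ^ 2 = 27 * (X ^ 3 + X) ^ 3 + 4 * (X ^ 3 + X)) := by
  constructor
  · intro X; ring
  · intro X Y h
    rw [mul_pow, h]; ring
end

section
/- For all X in a commutative ring, X⁹ + X³·(3X²+4)² = X³·(X²+1)·(X²+4)². Consequently, if (X, Y) is a point on the genus 2 curve Y² = (3X²+4)(X³+X) with 3X² + 4 ≠ 0, then (U, V) = (X³/(3X²+4), Y·X·(X²+4)/(3X²+4)²) satisfies V² = U³ + U. -/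
/-!
Writing `D = 3X² + 4`, the curve equation turns `V²` into `X³(X² + 1)(X² + 4)² / D³`, while
`U³ + U = (X⁹ + X³D²) / D³`; the two numerators agree by a polynomial identity.
-/

theorem covering_polynomial_identity {R : Type*} [CommRing R] (X : R) :
    X ^ 9 + X ^ 3 * (3 * X ^ 2 + 4) ^ 2 = X ^ 3 * (X ^ 2 + 1) * (X ^ 2 + 4) ^ 2 := by
  ring

theorem covering_map_satisfies_curve_equation {k : Type*} [Field k] {X Y : k}
    (hD : 3 * X ^ 2 + 4 ≠ 0) (hY : Y ^ 2 = (3 * X ^ 2 + 4) * (X ^ 3 + X)) :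
    (Y * X * (X ^ 2 + 4) / (3 * X ^ 2 + 4) ^ 2) ^ 2
      = (X ^ 3 / (3 * X ^ 2 + 4)) ^ 3 + X ^ 3 / (3 * X ^ 2 + 4) := by
  calc (Y * X * (X ^ 2 + 4) / (3 * X ^ 2 + 4) ^ 2) ^ 2
      = X ^ 3 * (X ^ 2 + 1) * (X ^ 2 + 4) ^ 2 / (3 * X ^ 2 + 4) ^ 3 := by
        rw [div_pow, mul_pow, mul_pow, hY]
        field_simp
    _ = (X ^ 9 + X ^ 3 * (3 * X ^ 2 + 4) ^ 2) / (3 * X ^ 2 + 4) ^ 3 := by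
        rw [covering_polynomial_identity]
    _ = (X ^ 3 / (3 * X ^ 2 + 4)) ^ 3 + X ^ 3 / (3 * X ^ 2 + 4) := by
        field_simp

theorem stmt_9 {R : Type*} [CommRing R] {k : Type*} [Field k] :
    (∀ X : R, X ^ 9 + X ^ 3 * (3 * X ^ 2 + 4) ^ 2
        = X ^ 3 * (X ^ 2 + 1) * (X ^ 2 + 4) ^ 2) ∧
    (∀ X Y : k, 3 * X ^ 2 + 4 ≠ 0 →
      Y ^ 2 = (3 * X ^ 2 + 4) * (X ^ 3 + X) →
      (Y * X * (X ^ 2 + 4) / (3 * X ^ 2 + 4) ^ 2) ^ 2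
        = (X ^ 3 / (3 * X ^ 2 + 4)) ^ 3 + X ^ 3 / (3 * X ^ 2 + 4)) :=
  ⟨covering_polynomial_identity, fun _ _ => covering_map_satisfies_curve_equation⟩
end

section
/- For all X in a commutative ring, 4·(X³+1)³ − 27·X⁶ = (4X³+1)·(X³−2)². Consequently, if (X, Y) is a point on the genus 2 curve Y² = (X³+1)(4X³+1) with X³ + 1 ≠ 0, then (U, V) = (X²/(X³+1), Y·(X³−2)/(X³+1)²) satisfies V² = −27U³ + 4. -/
/-! Dividing the identity `4 (X³+1)³ - 27 X⁶ = (4X³+1)(X³-2)²` by `(X³+1)³` gives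
`4 - 27 U³ = (4X³+1)(X³-2)² / (X³+1)³` for `U = X²/(X³+1)`, and on the curve the right-hand
side is `Y²(X³-2)² / (X³+1)⁴ = V²`. -/

theorem four_mul_cube_add_one_pow_three_sub {R : Type*} [CommRing R] (X : R) :
    4 * (X ^ 3 + 1) ^ 3 - 27 * X ^ 6 = (4 * X ^ 3 + 1) * (X ^ 3 - 2) ^ 2 := by
  ring

theorem jZero_curve_eq_of_genusTwo_curve {k : Type*} [Field k] {X Y : k}
    (hX : X ^ 3 + 1 ≠ 0) (hY : Y ^ 2 = (X ^ 3 + 1) * (4 * X ^ 3 + 1)) :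
    (Y * (X ^ 3 - 2) / (X ^ 3 + 1) ^ 2) ^ 2 = -27 * (X ^ 2 / (X ^ 3 + 1)) ^ 3 + 4 := by
  calc (Y * (X ^ 3 - 2) / (X ^ 3 + 1) ^ 2) ^ 2
      = (X ^ 3 + 1) * ((4 * X ^ 3 + 1) * (X ^ 3 - 2) ^ 2) / (X ^ 3 + 1) ^ 4 := by
        rw [div_pow, mul_pow, hY]; ring
    _ = (4 * (X ^ 3 + 1) ^ 3 - 27 * X ^ 6) / (X ^ 3 + 1) ^ 3 := by
        rw [← four_mul_cube_add_one_pow_three_sub]; field_simp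
    _ = -27 * (X ^ 2 / (X ^ 3 + 1)) ^ 3 + 4 := by
        field_simp; ring

theorem stmt_10 {R : Type*} [CommRing R] {k : Type*} [Field k] :
    (∀ X : R, 4 * (X ^ 3 + 1) ^ 3 - 27 * X ^ 6
        = (4 * X ^ 3 + 1) * (X ^ 3 - 2) ^ 2) ∧
    (∀ X Y : k, X ^ 3 + 1 ≠ 0 →
      Y ^ 2 = (X ^ 3 + 1) * (4 * X ^ 3 + 1) →
      (Y * (X ^ 3 - 2) / (X ^ 3 + 1) ^ 2) ^ 2
        = -27 * (X ^ 2 / (X ^ 3 + 1)) ^ 3 + 4) :=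
  ⟨four_mul_cube_add_one_pow_three_sub, fun _ _ ↦ jZero_curve_eq_of_genusTwo_curve⟩
end

section
/- The only rational point (u, v) ∈ ℚ² on the elliptic curve v² = u³ + u is (0, 0). -/
/-!
Write `u = p / q` in lowest terms with `q > 0`. Clearing denominators in `v² = u³ + u` shows that
`p q (p² + q²)` is the square of the rational `v q²`, hence of an integer. The three factors are
pairwise coprime, so `q = k²`, `p² + q² = b²` and `p = ±a²`, which gives `a⁴ + k⁴ = b²`; by Fermat's
theorem for the exponent four this forces `a = 0`, i.e. `u = 0`.
-/

theorem IsCoprime.isCoprime_sq_add_sq {R : Type*} [CommRing R] {p q : R} (h : IsCoprime p q) :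
    IsCoprime p (p ^ 2 + q ^ 2) := by
  simpa [sq, add_comm] using (h.pow_right (n := 2)).add_mul_left_right p

theorem Int.sq_of_isCoprime_of_pos {a b c : ℤ} (h : IsCoprime a b) (ha : 0 < a)
    (heq : a * b = c ^ 2) : ∃ a₀ : ℤ, a = a₀ ^ 2 := by
  obtain ⟨a₀, rfl | rfl⟩ := Int.sq_of_isCoprime h heq
  · exact ⟨a₀, rfl⟩
  · nlinarith [sq_nonneg a₀]

theorem Int.eq_zero_of_mul_mul_sq_add_sq_eq_sq {p q r : ℤ} (hpq : IsCoprime p q) (hq : 0 < q)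
    (h : p * q * (p ^ 2 + q ^ 2) = r ^ 2) : p = 0 := by
  by_contra hp
  have hm : 0 < p ^ 2 + q ^ 2 := by positivity
  have hp_qm : IsCoprime p (q * (p ^ 2 + q ^ 2)) := hpq.mul_right hpq.isCoprime_sq_add_sq
  have hq_m : IsCoprime q (p ^ 2 + q ^ 2) := by
    simpa [add_comm] using hpq.symm.isCoprime_sq_add_sq
  obtain ⟨a, ha⟩ := Int.sq_of_isCoprime hp_qm (by rw [← h, mul_assoc])
  obtain ⟨c, hc⟩ := Int.sq_of_isCoprime_of_pos hp_qm.symm (by positivity)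
    (by rw [← h, mul_comm, mul_assoc])
  obtain ⟨k, hk⟩ := Int.sq_of_isCoprime_of_pos hq_m hq hc
  obtain ⟨b, hb⟩ := Int.sq_of_isCoprime_of_pos hq_m.symm hm (by rw [mul_comm, hc])
  have hp2 : p ^ 2 = a ^ 4 := by rcases ha with rfl | rfl <;> ring
  refine not_fermat_42 (a := a) (b := k) ?_ ?_ (c := b) (by rw [← hb, hp2, hk]; ring)
  · rintro rfl
    exact hp (by simpa using hp2)
  · rintro rfl
    simp [hk] at hq

theorem Rat.isSquare_num_mul_den_mul_sq_add_sq {u v : ℚ} (h : v ^ 2 = u ^ 3 + u) :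
    IsSquare (u.num * u.den * (u.num ^ 2 + u.den ^ 2)) := by
  rw [← Rat.isSquare_intCast_iff]
  refine ⟨v * u.den ^ 2, ?_⟩
  push_cast
  rw [← Rat.mul_den_eq_num]
  linear_combination (-(u.den : ℚ) ^ 4) * h

theorem stmt_13 (u v : ℚ) :
    v ^ 2 = u ^ 3 + u ↔ u = 0 ∧ v = 0 := by
  constructor
  · intro h
    obtain ⟨r, hr⟩ := Rat.isSquare_num_mul_den_mul_sq_add_sq h
    have hu : u = 0 := Rat.num_eq_zero.mp <|
      Int.eq_zero_of_mul_mul_sq_add_sq_eq_sq (q := u.den)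
        (Int.isCoprime_iff_gcd_eq_one.mpr u.reduced) (Int.natCast_pos.mpr u.pos) (by rw [hr, sq])
    subst hu
    exact ⟨rfl, by simpa using h⟩
  · rintro ⟨rfl, rfl⟩
    norm_num
end

section
/- The only rational point (X, Y) ∈ ℚ² on the genus 2 curve Y² = (3X²+4)(X³+X) is (0, 0). -/
/-!
The map `(X, Y) ↦ (X³ / (3X² + 4), XY(X² + 4) / (3X² + 4)²)` sends the curve onto the elliptic
curve `V² = U³ + U`, whose only affine rational point is `(0, 0)`: writing `U = p / q` in lowest
terms, `p q (p² + q²)` would be a square with pairwise coprime factors, so `|p|`, `|q|` and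
`p² + q²` are squares, and `p² + q² = c²` with `p, q ≠ 0` would be a solution of
`a⁴ + b⁴ = c²`, which Fermat's descent rules out. Hence `X³ = 0`.
-/

theorem Int.mul_eq_zero_of_isSquare_mul_mul_sq_add_sq {p q : ℤ} (hpq : IsCoprime p q)
    (hsq : IsSquare (p * q * (p ^ 2 + q ^ 2))) : p * q = 0 := by
  by_contra hpq0
  obtain ⟨hp0, hq0⟩ := mul_ne_zero_iff.mp hpq0
  obtain ⟨w, hw⟩ := hsq
  have hpc : IsCoprime p (p ^ 2 + q ^ 2) := by
    simpa [add_comm, sq] using hpq.pow_right (n := 2) |>.add_mul_left_right p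
  have hqc : IsCoprime q (p ^ 2 + q ^ 2) := by
    simpa [sq] using hpq.symm.pow_right (n := 2) |>.add_mul_left_right q
  obtain ⟨a, ha⟩ := Int.sq_of_isCoprime (hpq.mul_right hpc) (c := w) (by linear_combination hw)
  obtain ⟨b, hb⟩ := Int.sq_of_isCoprime (hpq.symm.mul_right hqc) (c := w) (by linear_combination hw)
  obtain ⟨c, hc⟩ := Int.sq_of_isCoprime (hpc.symm.mul_right hqc.symm) (c := w) (by linear_combination hw)
  have ha0 : a ≠ 0 := by rintro rfl; simp_all
  have hb0 : b ≠ 0 := by rintro rfl; simp_all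
  have hab : a ^ 4 + b ^ 4 = p ^ 2 + q ^ 2 := by
    rcases ha with rfl | rfl <;> rcases hb with rfl | rfl <;> ring
  have hpos : 0 < a ^ 4 + b ^ 4 := by positivity
  refine not_fermat_42 ha0 hb0 (c := c) ?_
  rcases hc with hc | hc
  · rw [hab, hc]
  · nlinarith [sq_nonneg c]

theorem Rat.eq_zero_of_sq_eq_cube_add_self {U V : ℚ} (h : V ^ 2 = U ^ 3 + U) : U = 0 := by
  set p := U.num
  set q : ℤ := (U.den : ℤ)
  have hq0 : (q : ℚ) ≠ 0 := by positivity
  have hU : U = p / q := (Rat.num_div_den U).symm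
  have hsq : IsSquare ((p * q * (p ^ 2 + q ^ 2) : ℤ) : ℚ) :=
    ⟨V * q ^ 2, by rw [hU] at h; field_simp at h; push_cast; linear_combination (-(q : ℚ)) * h⟩
  have hpq := Int.mul_eq_zero_of_isSquare_mul_mul_sq_add_sq
    U.isCoprime_num_den (Rat.isSquare_intCast_iff.mp hsq)
  rw [mul_eq_zero, Rat.num_eq_zero] at hpq
  exact hpq.resolve_right (Int.natCast_ne_zero.mpr U.den_nz)

theorem sq_eq_cube_add_self_of_sq_eq_mul {X Y : ℚ} (h : Y ^ 2 = (3 * X ^ 2 + 4) * (X ^ 3 + X)) :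
    (X * Y * (X ^ 2 + 4) / (3 * X ^ 2 + 4) ^ 2) ^ 2
      = (X ^ 3 / (3 * X ^ 2 + 4)) ^ 3 + X ^ 3 / (3 * X ^ 2 + 4) := by
  have : (3 * X ^ 2 + 4 : ℚ) ≠ 0 := by positivity
  field_simp
  linear_combination X ^ 2 * (X ^ 2 + 4) ^ 2 * h

theorem stmt_14 (X Y : ℚ) :
    Y ^ 2 = (3 * X ^ 2 + 4) * (X ^ 3 + X) ↔ X = 0 ∧ Y = 0 := by
  constructor
  · intro h
    have hU := Rat.eq_zero_of_sq_eq_cube_add_self (sq_eq_cube_add_self_of_sq_eq_mul h)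
    have hX : X = 0 := by
      have : (3 * X ^ 2 + 4 : ℚ) ≠ 0 := by positivity
      simpa [this] using hU
    subst hX
    simpa using h
  · rintro ⟨rfl, rfl⟩
    ring
end

section
/- The genus 2 curve Y² = X⁶ + 3X⁴ − 6X² − 8 has no rational points: there is no pair (X, Y) ∈ ℚ² with Y² = X⁶ + 3X⁴ − 6X² − 8. -/
/-!
Write `X = a / b` in lowest terms. Then `c = Y b³` is an integer with
`c² = (a² + b²)(a² - 2b²)(a² + 4b²)`, and the three factors are coprime up to 2 and 3.

If `a` is odd they are pairwise coprime, hence squares `s², t², u²`, and `s⁴ = (tu)² + 9b⁴`.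
This quartic has no solution with `b ≠ 0` (it says that 3 is not a congruent number): two
rounds of the parametrisation of primitive Pythagorean triples turn a solution into coprime
`p > q > 0` of opposite parity with `pq(p - q)(p + q) = 3w²`. The four factors are squares
except for one, which is three times a square; depending on which one, either 3 divides two
coprime factors or a strictly smaller solution of the quartic appears, and Fermat descent
concludes.

If `a = 2a₀` is even, then `b` is odd. For even `a₀` the right side is `8` modulo `16`. For odd
`a₀`, both `4a₀² + b²` and `2a₀² - b²` are squares; their sum `6a₀²` is divisible by 3, hence
so are both square roots, whereas `3 ∤ a² + b²` by coprimality.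
-/

theorem IsCoprime.of_dvd_sub {R : Type*} [CommRing R] {x y k : R} (hk : IsCoprime x k)
    (h : x ∣ y - k) : IsCoprime x y := by
  obtain ⟨z, hz⟩ := h
  rw [show y = k + x * z by rw [← hz]; ring]
  exact hk.add_mul_left_right z

theorem IsCoprime.sub_add_of_odd {p q : ℤ} (hpq : IsCoprime p q) (hodd : Odd (p + q)) :
    IsCoprime (p - q) (p + q) := by
  have hodd' : Odd (p - q) := by
    obtain ⟨k, hk⟩ := hodd
    exact ⟨k - q, by linarith⟩
  exact (Int.isCoprime_two_right.2 hodd').mul_right (hpq.neg_right.of_dvd_sub ⟨1, by ring⟩).symm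
    |>.of_dvd_sub ⟨-1, by ring⟩

namespace Int

theorem exists_sq_of_isCoprime_of_mul_eq_sq {a b c : ℤ} (hab : IsCoprime a b) (ha : 0 ≤ a)
    (h : a * b = c ^ 2) : ∃ d, a = d ^ 2 := by
  obtain ⟨d, hd | hd⟩ := sq_of_isCoprime hab h
  · exact ⟨d, hd⟩
  · exact ⟨0, by nlinarith [sq_nonneg d]⟩

theorem exists_sq_of_pairwise_isCoprime_of_mul_eq_sq {a b c d : ℤ} (hab : IsCoprime a b)
    (hac : IsCoprime a c) (hbc : IsCoprime b c) (ha : 0 < a) (hc : 0 < c)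
    (h : a * b * c = d ^ 2) : ∃ r s t, a = r ^ 2 ∧ b = s ^ 2 ∧ c = t ^ 2 := by
  have hb : 0 ≤ b := nonneg_of_mul_nonneg_left (b := a * c)
    (by rw [show b * (a * c) = d ^ 2 by linear_combination h]; positivity) (by positivity)
  obtain ⟨r, hr⟩ := exists_sq_of_isCoprime_of_mul_eq_sq (c := d) (hab.mul_right hac) ha.le
    (by linear_combination h)
  obtain ⟨s, hs⟩ := exists_sq_of_isCoprime_of_mul_eq_sq (c := d) (hab.symm.mul_right hbc) hb
    (by linear_combination h)
  obtain ⟨t, ht⟩ := exists_sq_of_isCoprime_of_mul_eq_sq (c := d)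
    (hac.symm.mul_right hbc.symm) hc.le (by linear_combination h)
  exact ⟨r, s, t, hr, hs, ht⟩

theorem exists_sq_of_isCoprime_of_mul_eq_prime_mul_sq {p a b c : ℤ} (hp : Prime p)
    (hab : IsCoprime a b) (ha : 0 ≤ a) (hpa : ¬ p ∣ a) (h : a * b = p * c ^ 2) :
    ∃ d, a = d ^ 2 :=
  exists_sq_of_isCoprime_of_mul_eq_sq
    (hab.mul_right ((Irreducible.coprime_iff_not_dvd hp.irreducible).2 hpa).symm) ha
    (c := p * c) (by linear_combination p * h)

theorem exists_prime_mul_sq_of_isCoprime_of_mul_eq_prime_mul_sq {p a b c : ℤ} (hp : Prime p)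
    (hp0 : 0 < p) (hab : IsCoprime a b) (ha : 0 ≤ a) (hpa : p ∣ a) (h : a * b = p * c ^ 2) :
    ∃ d, a = p * d ^ 2 := by
  obtain ⟨k, rfl⟩ := hpa
  obtain ⟨d, rfl⟩ := exists_sq_of_isCoprime_of_mul_eq_sq hab.of_mul_left_right
    (nonneg_of_mul_nonneg_right ha hp0) (c := c)
    (mul_left_cancel₀ hp.ne_zero (by linear_combination h))
  exact ⟨d, rfl⟩

theorem exists_sq_of_pairwise_isCoprime_of_mul_eq_prime_mul_sq {p a b c d e : ℤ} (hp : Prime p)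
    (hp0 : 0 < p) (hab : IsCoprime a b) (hac : IsCoprime a c) (had : IsCoprime a d)
    (hbc : IsCoprime b c) (hbd : IsCoprime b d) (hcd : IsCoprime c d) (ha : 0 ≤ a) (hb : 0 ≤ b)
    (hc : 0 ≤ c) (hd : 0 ≤ d) (hpa : p ∣ a) (h : a * b * c * d = p * e ^ 2) :
    ∃ r s t u, a = p * r ^ 2 ∧ b = s ^ 2 ∧ c = t ^ 2 ∧ d = u ^ 2 := by
  have hndvd {x : ℤ} (hax : IsCoprime a x) : ¬ p ∣ x :=
    fun hpx ↦ hp.not_isUnit (hax.isUnit_of_dvd' hpa hpx)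
  obtain ⟨r, hr⟩ := exists_prime_mul_sq_of_isCoprime_of_mul_eq_prime_mul_sq hp hp0 (c := e)
    (hab.mul_right (hac.mul_right had)) ha hpa (by linear_combination h)
  obtain ⟨s, hs⟩ := exists_sq_of_isCoprime_of_mul_eq_prime_mul_sq hp (c := e)
    (hab.symm.mul_right (hbc.mul_right hbd)) hb (hndvd hab) (by linear_combination h)
  obtain ⟨t, ht⟩ := exists_sq_of_isCoprime_of_mul_eq_prime_mul_sq hp (c := e)
    (hac.symm.mul_right (hbc.symm.mul_right hcd)) hc (hndvd hac) (by linear_combination h)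
  obtain ⟨u, hu⟩ := exists_sq_of_isCoprime_of_mul_eq_prime_mul_sq hp (c := e)
    (had.symm.mul_right (hbd.symm.mul_right hcd.symm)) hd (hndvd had) (by linear_combination h)
  exact ⟨r, s, t, u, hr, hs, ht, hu⟩

theorem three_dvd_of_three_dvd_sq_add_sq {s t : ℤ} (h : 3 ∣ s ^ 2 + t ^ 2) : 3 ∣ s := by
  have key : ∀ a b : ZMod 3, a ^ 2 + b ^ 2 = 0 → a = 0 := by decide
  have := (ZMod.intCast_zmod_eq_zero_iff_dvd (s ^ 2 + t ^ 2) 3).2 h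
  push_cast at this
  exact (ZMod.intCast_zmod_eq_zero_iff_dvd s 3).1 (key _ _ this)

theorem not_three_dvd_sq_add_sq_of_isCoprime {a b : ℤ} (hab : IsCoprime a b) :
    ¬ 3 ∣ a ^ 2 + b ^ 2 :=
  fun h ↦ prime_three.not_isUnit <| hab.isUnit_of_dvd' (three_dvd_of_three_dvd_sq_add_sq h)
    (three_dvd_of_three_dvd_sq_add_sq (add_comm (a ^ 2) _ ▸ h))

end Int

theorem Rat.exists_int_eq_of_sq_eq_intCast {q : ℚ} {n : ℤ} (h : q ^ 2 = n) :
    ∃ m : ℤ, q = m := by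
  obtain ⟨m, hm⟩ := IsIntegrallyClosed.exists_algebraMap_eq_of_isIntegral_pow (R := ℤ) two_pos
    (by rw [h, ← eq_intCast (algebraMap ℤ ℚ)]; exact isIntegral_algebraMap)
  exact ⟨m, by simpa using hm.symm⟩

theorem PythagoreanTriple.exists_classification_of_pos {a b c : ℤ} (h : PythagoreanTriple a b c)
    (hab : IsCoprime a b) (ha : 0 < a) (hb : 0 < b) (hc : 0 < c) :
    ∃ m n, 0 < n ∧ n < m ∧ IsCoprime m n ∧ Odd (m + n) ∧ c = m ^ 2 + n ^ 2 ∧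
      (a = m ^ 2 - n ^ 2 ∧ b = 2 * m * n ∨ a = 2 * m * n ∧ b = m ^ 2 - n ^ 2) := by
  have key {a b : ℤ} (h : PythagoreanTriple a b c) (hab : Int.gcd a b = 1) (ha2 : a % 2 = 1)
      (ha : 0 < a) (hb : 0 < b) : ∃ m n, 0 < n ∧ n < m ∧ IsCoprime m n ∧ Odd (m + n) ∧
        c = m ^ 2 + n ^ 2 ∧ a = m ^ 2 - n ^ 2 ∧ b = 2 * m * n := by
    obtain ⟨m, n, rfl, rfl, rfl, hmn, hpar, hm⟩ := h.coprime_classification' hab ha2 hc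
    have hn : 0 < n := by nlinarith
    exact ⟨m, n, hn, by nlinarith, Int.isCoprime_iff_gcd_eq_one.2 hmn,
      Int.odd_iff.2 (by omega), rfl, rfl, rfl⟩
  have hgcd := Int.isCoprime_iff_gcd_eq_one.1 hab
  rcases h.even_odd_of_coprime hgcd with ⟨-, hb2⟩ | ⟨ha2, -⟩
  · obtain ⟨m, n, hn, hnm, hmn, hodd, hc, hb, ha⟩ :=
      key h.symm (Int.gcd_comm a b ▸ hgcd) hb2 hb ha
    exact ⟨m, n, hn, hnm, hmn, hodd, hc, .inr ⟨ha, hb⟩⟩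
  · obtain ⟨m, n, hn, hnm, hmn, hodd, hc, ha, hb⟩ := key h hgcd ha2 ha hb
    exact ⟨m, n, hn, hnm, hmn, hodd, hc, .inl ⟨ha, hb⟩⟩

theorem fourth_pow_ne_sq_add_nine_mul_fourth_pow_of_odd_of_even {x y z : ℤ} (hy : Odd y)
    (hz : Even z) : x ^ 4 ≠ z ^ 2 + 9 * y ^ 4 := by
  obtain ⟨j, rfl⟩ := hy
  obtain ⟨k, rfl⟩ := hz
  have key : ∀ X K J : ZMod 16, X ^ 4 ≠ (K + K) ^ 2 + 9 * (2 * J + 1) ^ 4 := by decide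
  exact fun h ↦ key x k j (by exact_mod_cast congrArg (Int.cast : ℤ → ZMod 16) h)

theorem not_three_dvd_of_fourth_pow_eq {x y z : ℤ} (hxy : IsCoprime x y)
    (h : x ^ 4 = z ^ 2 + 9 * y ^ 4) : ¬ 3 ∣ z := by
  rintro ⟨z₁, rfl⟩
  obtain ⟨x₁, rfl⟩ := Int.prime_three.dvd_of_dvd_pow (a := x) (n := 4)
    ⟨3 * z₁ ^ 2 + 3 * y ^ 4, by linear_combination h⟩
  have h3y : 3 ∣ y := Int.prime_three.dvd_of_dvd_pow (n := 2)
    (Int.three_dvd_of_three_dvd_sq_add_sq (t := z₁) ⟨3 * x₁ ^ 4, by linarith⟩)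
  exact Int.prime_three.not_isUnit (hxy.isUnit_of_dvd' (dvd_mul_right 3 x₁) h3y)

theorem exists_mul_eq_three_mul_sq_of_fourth_pow_eq {x y z : ℤ} (hxy : IsCoprime x y)
    (hy : y ≠ 0) (h : x ^ 4 = z ^ 2 + 9 * y ^ 4) :
    ∃ p q w : ℤ, 0 < q ∧ q < p ∧ IsCoprime p q ∧ Odd (p + q) ∧ |x| = p ^ 2 + q ^ 2 ∧
      p * q * (p - q) * (p + q) = 3 * w ^ 2 := by
  have hzy : IsCoprime z y := by
    have : IsCoprime (z ^ 2 + y * (9 * y ^ 3)) y := by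
      convert hxy.pow_left (m := 4) using 1
      linear_combination -h
    exact (IsCoprime.pow_left_iff two_pos).1 (IsCoprime.add_mul_left_left_iff.1 this)
  have hz : Odd z := by
    refine Int.not_even_iff_odd.1 fun hz ↦ fourth_pow_ne_sq_add_nine_mul_fourth_pow_of_odd_of_even
      (Int.not_even_iff_odd.1 fun hy ↦ ?_) hz h
    exact Int.prime_two.not_isUnit (hzy.isUnit_of_dvd' hz.two_dvd hy.two_dvd)
  have hx : x ≠ 0 := by
    rintro rfl
    have : 0 < y ^ 4 := by positivity
    nlinarith [sq_nonneg z]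
  have hcop : IsCoprime |z| (3 * y ^ 2) :=
    ((Irreducible.coprime_iff_not_dvd Int.prime_three.irreducible).2
      (not_three_dvd_of_fourth_pow_eq hxy h)).symm.mul_right hzy.pow_right |>.abs_left
  have htriple : PythagoreanTriple |z| (3 * y ^ 2) (x ^ 2) := by
    rw [PythagoreanTriple, abs_mul_abs_self]
    linear_combination -h
  obtain ⟨P, Q, hQ, hQP, hPQ, -, hxPQ, hzPQ⟩ := htriple.exists_classification_of_pos hcop
    (abs_pos.2 fun h0 ↦ by simp [h0] at hz) (by positivity) (by positivity)
  have h3y : 3 * y ^ 2 = 2 * P * Q := by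
    rcases hzPQ with ⟨-, h3y⟩ | ⟨hzPQ, -⟩
    · exact h3y
    · exact absurd (odd_abs.2 hz) (by rw [hzPQ, Int.not_odd_iff_even]; exact ⟨P * Q, by ring⟩)
  have htriple' : PythagoreanTriple P Q |x| := by
    rw [PythagoreanTriple, abs_mul_abs_self]
    nlinarith
  obtain ⟨p, q, hq, hqp, hpq, hodd, hxpq, hPQpq⟩ :=
    htriple'.exists_classification_of_pos hPQ (hQ.trans hQP) hQ (abs_pos.2 hx)
  have hPQ' : P * Q = 2 * p * q * (p ^ 2 - q ^ 2) := by
    rcases hPQpq with ⟨rfl, rfl⟩ | ⟨rfl, rfl⟩ <;> ring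
  obtain ⟨w, rfl⟩ : Even y := by
    have : Even (3 * y ^ 2) := ⟨P * Q, by linarith⟩
    exact (Int.even_pow.1 ((Int.even_mul.1 this).resolve_left (by decide))).1
  exact ⟨p, q, w, hq, hqp, hpq, hodd, hxpq, by linarith⟩

theorem exists_sq_of_mul_eq_three_mul_sq {p q w : ℤ} (hq : 0 < q) (hqp : q < p)
    (hpq : IsCoprime p q) (hodd : Odd (p + q)) (h : p * q * (p - q) * (p + q) = 3 * w ^ 2) :
    ∃ r s t u, p = s ^ 2 ∧ p + q = u ^ 2 ∧
      (q = 3 * r ^ 2 ∧ p - q = t ^ 2 ∨ q = t ^ 2 ∧ p - q = 3 * r ^ 2) := by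
  have hp_sub : IsCoprime p (p - q) := hpq.neg_right.of_dvd_sub ⟨1, by ring⟩
  have hp_add : IsCoprime p (p + q) := hpq.of_dvd_sub ⟨1, by ring⟩
  have hq_sub : IsCoprime q (p - q) := hpq.symm.of_dvd_sub ⟨-1, by ring⟩
  have hq_add : IsCoprime q (p + q) := hpq.symm.of_dvd_sub ⟨1, by ring⟩
  have hsub_add := hpq.sub_add_of_odd hodd
  have hnot3 {a b : ℤ} (hab : IsCoprime a b) (ha : 3 ∣ a) (hb : 3 ∣ b) : False :=
    Int.prime_three.not_isUnit (hab.isUnit_of_dvd' ha hb)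
  have h3sq {a b s t : ℤ} (ha : a = s ^ 2) (hb : b = t ^ 2) (h3 : 3 ∣ a + b) : 3 ∣ a := by
    rw [ha, hb] at h3
    exact ha ▸ dvd_pow (Int.three_dvd_of_three_dvd_sq_add_sq h3) two_ne_zero
  -- If 3 divides `p` or `p + q`, then `h3sq` puts 3 into a coprime factor as well.
  rcases Int.prime_three.dvd_mul.1 (⟨w ^ 2, h⟩ : 3 ∣ p * q * (p - q) * (p + q)) with h3 | h3
  · rcases Int.prime_three.dvd_mul.1 h3 with h3 | h3
    · rcases Int.prime_three.dvd_mul.1 h3 with h3 | h3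
      · obtain ⟨-, -, t, u, -, -, ht, hu⟩ :=
          Int.exists_sq_of_pairwise_isCoprime_of_mul_eq_prime_mul_sq (e := w) Int.prime_three
            three_pos hpq hp_sub hp_add hq_sub hq_add hsub_add (by linarith) hq.le (by linarith)
            (by linarith) h3 h
        refine (hnot3 hp_sub h3 (h3sq ht hu ?_)).elim
        rw [show p - q + (p + q) = 2 * p by ring]
        exact dvd_mul_of_dvd_right h3 2
      · obtain ⟨r, s, t, u, hr, hs, ht, hu⟩ :=
          Int.exists_sq_of_pairwise_isCoprime_of_mul_eq_prime_mul_sq (e := w) Int.prime_three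
            three_pos hpq.symm hq_sub hq_add hp_sub hp_add hsub_add hq.le (by linarith)
            (by linarith) (by linarith) h3 (by linear_combination h)
        exact ⟨r, s, t, u, hs, hu, .inl ⟨hr, ht⟩⟩
    · obtain ⟨r, s, t, u, hr, hs, ht, hu⟩ :=
        Int.exists_sq_of_pairwise_isCoprime_of_mul_eq_prime_mul_sq (e := w) Int.prime_three
          three_pos hp_sub.symm hq_sub.symm hsub_add hpq hp_add hq_add (by linarith)
          (by linarith) hq.le (by linarith) h3 (by linear_combination h)
      exact ⟨r, s, t, u, hs, hu, .inr ⟨ht, hr⟩⟩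
  · obtain ⟨-, s, t, -, -, hs, ht, -⟩ :=
      Int.exists_sq_of_pairwise_isCoprime_of_mul_eq_prime_mul_sq (e := w) Int.prime_three
        three_pos hp_add.symm hq_add.symm hsub_add.symm hpq hp_sub hq_sub (by linarith)
        (by linarith) hq.le (by linarith) h3 (by linear_combination h)
    exact (hnot3 hp_add (h3sq hs ht h3) h3).elim

theorem exists_fourth_pow_eq_of_mul_eq_three_mul_sq {p q w : ℤ} (hq : 0 < q) (hqp : q < p)
    (hpq : IsCoprime p q) (hodd : Odd (p + q)) (h : p * q * (p - q) * (p + q) = 3 * w ^ 2) :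
    ∃ x y z : ℤ, IsCoprime x y ∧ y ≠ 0 ∧ x ^ 4 = z ^ 2 + 9 * y ^ 4 ∧
      |x| < p ^ 2 + q ^ 2 := by
  have habs (s : ℤ) : |s| ≤ s ^ 2 := Int.abs_eq_natAbs s ▸ Int.natAbs_le_self_sq s
  have hcop {a b s r : ℤ} (hab : IsCoprime a b) (ha : a = s ^ 2) (hb : b = 3 * r ^ 2) :
      IsCoprime s r := by
    rw [ha, hb] at hab
    exact (IsCoprime.pow_left_iff two_pos).1
      ((IsCoprime.pow_right_iff two_pos).1 hab.of_mul_right_right)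
  obtain ⟨r, s, t, u, hs, hu, ⟨hr, ht⟩ | ⟨ht, hr⟩⟩ :=
    exists_sq_of_mul_eq_three_mul_sq hq hqp hpq hodd h
  · refine ⟨s, r, t * u, hcop hpq hs hr, ?_, ?_, by nlinarith [habs s]⟩
    · rintro rfl
      linarith
    · linear_combination (-(p + s ^ 2)) * hs + (p + q) * ht + t ^ 2 * hu + (q + 3 * r ^ 2) * hr
  · refine ⟨u, r, 2 * s * t, hcop (hpq.sub_add_of_odd hodd).symm hu hr, ?_, ?_,
      by nlinarith [habs u]⟩
    · rintro rfl
      linarith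
    · linear_combination (-(u ^ 2 + p + q)) * hu + 4 * q * hs + 4 * s ^ 2 * ht +
        (p - q + 3 * r ^ 2) * hr

theorem fourth_pow_ne_sq_add_nine_mul_fourth_pow {x y z : ℤ} (hxy : IsCoprime x y)
    (hy : y ≠ 0) : x ^ 4 ≠ z ^ 2 + 9 * y ^ 4 := by
  induction hn : x.natAbs using Nat.strong_induction_on generalizing x y z with
  | _ n ih =>
    intro h
    obtain ⟨p, q, w, hq, hqp, hpq, hodd, hx, hw⟩ :=
      exists_mul_eq_three_mul_sq_of_fourth_pow_eq hxy hy h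
    obtain ⟨x', y', z', hxy', hy', h', hlt⟩ :=
      exists_fourth_pow_eq_of_mul_eq_three_mul_sq hq hqp hpq hodd hw
    refine ih x'.natAbs ?_ hxy' hy' rfl h'
    rw [← hn]
    zify
    rwa [hx]

theorem sq_ne_sextic_of_odd {a b c : ℤ} (hab : IsCoprime a b) (hb : b ≠ 0) (ha : Odd a) :
    c ^ 2 ≠ (a ^ 2 + b ^ 2) * (a ^ 2 - 2 * b ^ 2) * (a ^ 2 + 4 * b ^ 2) := by
  intro h
  have hP3 : IsCoprime (a ^ 2 + b ^ 2) 3 := ((Irreducible.coprime_iff_not_dvd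
    Int.prime_three.irreducible).2 (Int.not_three_dvd_sq_add_sq_of_isCoprime hab)).symm
  have hPb : IsCoprime (a ^ 2 + b ^ 2) b :=
    ((hab.symm.pow_right (n := 2)).of_dvd_sub ⟨b, by ring⟩).symm
  have hQ3 : IsCoprime (a ^ 2 - 2 * b ^ 2) 3 := (hP3.symm.of_dvd_sub ⟨-b ^ 2, by ring⟩).symm
  have hQb : IsCoprime (a ^ 2 - 2 * b ^ 2) b :=
    ((hab.symm.pow_right (n := 2)).of_dvd_sub ⟨-2 * b, by ring⟩).symm
  have hQ2 : IsCoprime (a ^ 2 - 2 * b ^ 2) 2 :=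
    Int.isCoprime_two_right.2 (ha.pow.sub_even ⟨b ^ 2, by ring⟩)
  have hPQ : IsCoprime (a ^ 2 + b ^ 2) (a ^ 2 - 2 * b ^ 2) :=
    (hP3.mul_right (hPb.pow_right (n := 2))).neg_right.of_dvd_sub ⟨1, by ring⟩
  have hPR : IsCoprime (a ^ 2 + b ^ 2) (a ^ 2 + 4 * b ^ 2) :=
    (hP3.mul_right (hPb.pow_right (n := 2))).of_dvd_sub ⟨1, by ring⟩
  have hQR : IsCoprime (a ^ 2 - 2 * b ^ 2) (a ^ 2 + 4 * b ^ 2) :=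
    (hQ2.mul_right (hQ3.mul_right (hQb.pow_right (n := 2)))).of_dvd_sub ⟨1, by ring⟩
  obtain ⟨s, t, u, hs, ht, hu⟩ := Int.exists_sq_of_pairwise_isCoprime_of_mul_eq_sq hPQ hPR hQR
    (by positivity) (by positivity) h.symm
  have hsb : IsCoprime s b := (IsCoprime.pow_left_iff two_pos).1 (hs ▸ hPb)
  exact fourth_pow_ne_sq_add_nine_mul_fourth_pow hsb hb (z := t * u) <| by
    linear_combination (-(s ^ 2 + a ^ 2 + b ^ 2)) * hs + (a ^ 2 + 4 * b ^ 2) * ht + t ^ 2 * hu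

theorem sq_ne_sextic_of_four_dvd {a b c : ℤ} (ha : 4 ∣ a) (hb : Odd b) :
    c ^ 2 ≠ (a ^ 2 + b ^ 2) * (a ^ 2 - 2 * b ^ 2) * (a ^ 2 + 4 * b ^ 2) := by
  obtain ⟨a₁, rfl⟩ := ha
  obtain ⟨j, rfl⟩ := hb
  have key : ∀ C A J : ZMod 16, C ^ 2 ≠ ((4 * A) ^ 2 + (2 * J + 1) ^ 2) *
      ((4 * A) ^ 2 - 2 * (2 * J + 1) ^ 2) * ((4 * A) ^ 2 + 4 * (2 * J + 1) ^ 2) := by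
    decide
  exact fun h ↦ key c a₁ j (by exact_mod_cast congrArg (Int.cast : ℤ → ZMod 16) h)

theorem sq_ne_sextic_of_two_mul_odd {a b c : ℤ} (hab : IsCoprime (2 * a) b) (ha : Odd a) :
    c ^ 2 ≠ ((2 * a) ^ 2 + b ^ 2) * ((2 * a) ^ 2 - 2 * b ^ 2) * ((2 * a) ^ 2 + 4 * b ^ 2) := by
  intro h
  have hb : Odd b := Int.isCoprime_two_left.1 hab.of_mul_left_left
  obtain ⟨w, hw⟩ : Even (a ^ 2 + b ^ 2) := ha.pow.add_odd hb.pow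
  have hP3 : IsCoprime (4 * a ^ 2 + b ^ 2) 3 :=
    ((Irreducible.coprime_iff_not_dvd Int.prime_three.irreducible).2
      (by simpa [mul_pow] using Int.not_three_dvd_sq_add_sq_of_isCoprime hab)).symm
  have hPb : IsCoprime (4 * a ^ 2 + b ^ 2) b :=
    ((hab.symm.pow_right (n := 2)).of_dvd_sub ⟨b, by ring⟩).symm
  have hQ3 : IsCoprime (2 * a ^ 2 - b ^ 2) 3 :=
    (hP3.symm.of_dvd_sub (y := 2 * (2 * a ^ 2 - b ^ 2))
      ⟨-b ^ 2, by ring⟩).of_mul_right_right.symm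
  have hQa : IsCoprime (2 * a ^ 2 - b ^ 2) a :=
    ((hab.of_mul_left_right.pow_right (n := 2)).neg_right.of_dvd_sub ⟨2 * a, by ring⟩).symm
  have hPQ : IsCoprime (4 * a ^ 2 + b ^ 2) (2 * a ^ 2 - b ^ 2) :=
    ((hP3.mul_right (hPb.pow_right (n := 2))).neg_right.of_dvd_sub
      (y := 2 * (2 * a ^ 2 - b ^ 2)) ⟨1, by ring⟩).of_mul_right_right
  have hPw : IsCoprime (4 * a ^ 2 + b ^ 2) w :=
    ((hP3.mul_right (hPb.pow_right (n := 2))).of_dvd_sub (y := 8 * w)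
      ⟨1, by linear_combination -4 * hw⟩).of_mul_right_right
  have hQw : IsCoprime (2 * a ^ 2 - b ^ 2) w :=
    ((hQ3.mul_right (hQa.pow_right (n := 2))).of_dvd_sub (y := 2 * w)
      ⟨-1, by linear_combination -hw⟩).of_mul_right_right
  obtain ⟨c, rfl⟩ : 4 ∣ c := (Int.pow_dvd_pow_iff two_ne_zero).1
    ⟨(4 * a ^ 2 + b ^ 2) * (2 * a ^ 2 - b ^ 2) * w, by
      linear_combination h + 8 * (4 * a ^ 2 + b ^ 2) * (2 * a ^ 2 - b ^ 2) * hw⟩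
  have hc : (4 * a ^ 2 + b ^ 2) * (2 * a ^ 2 - b ^ 2) * w = c ^ 2 :=
    mul_left_cancel₀ (by norm_num : (16 : ℤ) ≠ 0)
      (by linear_combination -h - 8 * (4 * a ^ 2 + b ^ 2) * (2 * a ^ 2 - b ^ 2) * hw)
  have hb0 : b ≠ 0 := by rintro rfl; simp at hb
  obtain ⟨s, t, -, hs, ht, -⟩ := Int.exists_sq_of_pairwise_isCoprime_of_mul_eq_sq hPQ hPw hQw
    (by positivity) (by nlinarith [sq_nonneg a, show 0 < b ^ 2 by positivity]) hc
  have h3s : 3 ∣ s := Int.three_dvd_of_three_dvd_sq_add_sq (t := t)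
    ⟨2 * a ^ 2, by linear_combination -hs - ht⟩
  exact Int.prime_three.not_isUnit
    (hP3.isUnit_of_dvd' (hs ▸ dvd_pow h3s two_ne_zero) (dvd_refl 3))

theorem sq_ne_sextic_of_isCoprime {a b c : ℤ} (hab : IsCoprime a b) (hb : b ≠ 0) :
    c ^ 2 ≠ (a ^ 2 + b ^ 2) * (a ^ 2 - 2 * b ^ 2) * (a ^ 2 + 4 * b ^ 2) := by
  rcases Int.even_or_odd a with ⟨a, rfl⟩ | ha
  · rw [← two_mul] at hab ⊢
    rcases Int.even_or_odd a with ⟨a₁, rfl⟩ | ha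
    · exact sq_ne_sextic_of_four_dvd ⟨a₁, by ring⟩
        (Int.isCoprime_two_left.1 hab.of_mul_left_left)
    · exact sq_ne_sextic_of_two_mul_odd hab ha
  · exact sq_ne_sextic_of_odd hab hb ha

theorem stmt_16 : ¬ ∃ X Y : ℚ, Y ^ 2 = X ^ 6 + 3 * X ^ 4 - 6 * X ^ 2 - 8 := by
  rintro ⟨X, Y, h⟩
  have hsq : (Y * X.den ^ 3) ^ 2 = ((X.num ^ 2 + X.den ^ 2) * (X.num ^ 2 - 2 * X.den ^ 2) *
      (X.num ^ 2 + 4 * X.den ^ 2) : ℤ) := by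
    push_cast
    rw [← Rat.mul_den_eq_num]
    linear_combination (X.den : ℚ) ^ 6 * h
  obtain ⟨c, hc⟩ := Rat.exists_int_eq_of_sq_eq_intCast hsq
  exact sq_ne_sextic_of_isCoprime X.isCoprime_num_den (by positivity)
    (by exact_mod_cast hc ▸ hsq)
end
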